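/- For the multinomial normalization term C₁(K, n) = ∑_{h₁+⋯+h_K = n} (n! / (h₁!⋯h_K!)) ∏_{k=1}^{K} (h_k/n)^{h_k} (with the convention 0⁰ = 1), the recursion C₁(K+2, n) = C₁(K+1, n) + (n/K)·C₁(K, n) holds for all integers K ≥ 1 and n ≥ 1. -/

import Mathlib

/-! Expanding the multinomial coefficient gives `C₁(K, n) = n!/n^n · [z^n] B(z)^K` with
`B(z) = ∑ m^m z^m / m!`. Let `T(z) = ∑_{m ≥ 1} m^(m-1) z^m / m!` be the tree function. Then
`z T' = B - 1` termwise, while `T B = B - 1` is Abel's identity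
`∑_{i+j=n} C(n+1, i+1) (i+1)^i j^j = (n+1)^(n+1)`. Differentiating `T B = B - 1` yields
`z B' = B³ - B²`, so `z (B^K)' = K (B^(K+2) - B^(K+1))`, and comparing `n`-th coefficients is the
recursion.

Abel's identity is the value at `x = n + 1` of the polynomial identity
`∑_k C(n+1, k+1) (k+1)^k (x-k-1)^(n-k) = (n+1) x^n`, proved by induction on `n`: the derivative of
the left side is `n + 1` times the previous case, and at `x = 0` it is an `(n+1)`-st finite
difference of `x^n`, hence `0`.
-/

open Finset

/-- The multinomial NML normalization term
`C₁(K, n) = ∑_{h₁+⋯+h_K = n} (n!/(h₁!⋯h_K!)) ∏_k (h_k/n)^{h_k}` (with `0^0 = 1`). -/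
noncomputable def C1 (K n : ℕ) : ℝ :=
  ∑ h ∈ Finset.Nat.antidiagonalTuple K n,
    (Nat.multinomial Finset.univ h : ℝ) * ∏ k, ((h k : ℝ) / (n : ℝ)) ^ (h k)

open PowerSeries
open scoped Nat

theorem PowerSeries.coeff_pow_eq_sum_antidiagonalTuple {R : Type*} [CommSemiring R] (f : R⟦X⟧)
    (K n : ℕ) :
    coeff n (f ^ K) = ∑ h ∈ Nat.antidiagonalTuple K n, ∏ i, coeff (h i) f := by
  rw [← Finset.piAntidiag_univ_fin_eq_antidiagonalTuple, ← Fin.prod_const, coeff_prod,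
    finsuppAntidiag, sum_map]
  exact sum_attach (univ.piAntidiag n) fun h => ∏ i, coeff (h i) f

theorem PowerSeries.coeff_X_mul_derivative {R : Type*} [CommSemiring R] (f : R⟦X⟧) (n : ℕ) :
    coeff n (X * d⁄dX R f) = n * coeff n f := by
  cases n with
  | zero => simp
  | succ n => rw [coeff_succ_X_mul, coeff_derivative, mul_comm, Nat.cast_succ]

theorem sum_neg_one_pow_mul_choose_mul_pow_eq_zero {R : Type*} [CommRing R] {j n : ℕ}
    (h : j < n) : ∑ k ∈ range (n + 1), (-1 : R) ^ (n - k) * n.choose k * (k : R) ^ j = 0 := by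
  have := congrFun (fwdDiff_iter_pow_eq_zero_of_lt (R := R) h) 0
  rw [fwdDiff_iter_eq_sum_shift] at this
  simpa [zsmul_eq_mul] using this

noncomputable def abelSum (n : ℕ) (x : ℝ) : ℝ :=
  ∑ k ∈ range (n + 1), ((n + 1).choose (k + 1) : ℝ) * ((k : ℝ) + 1) ^ k * (x - (k + 1)) ^ (n - k)

theorem abelSum_succ_zero (n : ℕ) : abelSum (n + 1) 0 = 0 := by
  have h := sum_neg_one_pow_mul_choose_mul_pow_eq_zero (R := ℝ) (Nat.lt_succ_self (n + 1))
  rw [sum_range_succ'] at h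
  simp only [Nat.cast_zero, zero_pow (Nat.succ_ne_zero n), mul_zero, add_zero] at h
  refine (sum_congr rfl fun k hk => ?_).trans h
  have hk : k ≤ n + 1 := Nat.lt_succ_iff.mp (mem_range.mp hk)
  rw [zero_sub, neg_pow, show n + 1 + 1 - (k + 1) = n + 1 - k by omega]
  have hpow : ((k : ℝ) + 1) ^ k * ((k : ℝ) + 1) ^ (n + 1 - k) = ((k : ℝ) + 1) ^ (n + 1) := by
    rw [← pow_add, Nat.add_sub_cancel' hk]
  push_cast
  linear_combination ((-1 : ℝ) ^ (n + 1 - k) * ((n + 1 + 1).choose (k + 1) : ℝ)) * hpow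

theorem hasDerivAt_abelSum_succ (n : ℕ) (x : ℝ) :
    HasDerivAt (abelSum (n + 1)) ((n + 2) * abelSum n x) x := by
  unfold abelSum
  refine (HasDerivAt.fun_sum (u := range (n + 2)) fun k _ =>
    (((hasDerivAt_id x).sub_const ((k : ℝ) + 1)).pow (n + 1 - k)).const_mul
      (((n + 2).choose (k + 1) : ℝ) * ((k : ℝ) + 1) ^ k)).congr_deriv ?_
  rw [mul_sum, sum_range_succ, Nat.sub_self, Nat.cast_zero, zero_mul, zero_mul, mul_zero,
    add_zero]
  refine sum_congr rfl fun k _ => ?_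
  have hc : ((n + 2).choose (k + 1) : ℝ) * ((n + 1 - k : ℕ) : ℝ)
      = (n + 2) * (n + 1).choose (k + 1) := by
    have := Nat.choose_mul_succ_eq (n + 1) (k + 1)
    rw [show n + 1 + 1 - (k + 1) = n + 1 - k by omega] at this
    exact_mod_cast this.symm.trans (mul_comm _ _)
  rw [show n + 1 - k - 1 = n - k by omega, id]
  linear_combination (((k : ℝ) + 1) ^ k * (x - (k + 1)) ^ (n - k)) * hc

theorem abelSum_eq (n : ℕ) (x : ℝ) : abelSum n x = (n + 1) * x ^ n := by
  induction n generalizing x with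
  | zero => simp [abelSum]
  | succ n ih =>
    have hderiv (y : ℝ) :
        HasDerivAt (fun z => abelSum (n + 1) z - (n + 2) * z ^ (n + 1)) 0 y := by
      refine ((hasDerivAt_abelSum_succ n y).sub
        ((hasDerivAt_pow (n + 1) y).const_mul ((n : ℝ) + 2))).congr_deriv ?_
      rw [ih]; push_cast; ring
    have hconst := is_const_of_deriv_eq_zero (fun y => (hderiv y).differentiableAt)
      (fun y => (hderiv y).deriv) x 0
    rw [abelSum_succ_zero] at hconst
    push_cast
    linear_combination hconst

theorem sum_antidiagonal_pow_div_factorial (n : ℕ) :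
    ∑ p ∈ antidiagonal n, ((p.1 : ℝ) + 1) ^ p.1 / (p.1 + 1)! * ((p.2 : ℝ) ^ p.2 / p.2 !)
      = ((n : ℝ) + 1) ^ (n + 1) / (n + 1)! := by
  rw [pow_succ', ← abelSum_eq, abelSum, sum_div, Nat.sum_antidiagonal_eq_sum_range_succ_mk]
  refine sum_congr rfl fun k hk => ?_
  have hk : k ≤ n := Nat.lt_succ_iff.mp (mem_range.mp hk)
  rw [Nat.cast_choose ℝ (Nat.succ_le_succ hk), Nat.succ_sub_succ, Nat.cast_sub hk]
  have : ((n - k)! : ℝ) ≠ 0 := by positivity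
  field_simp
  ring

-- `T(z)`, written as `X * _` to avoid the junk value `0 ^ (0 - 1) = 1` at `m = 0`.
noncomputable def treeSeries : ℝ⟦X⟧ := X * mk fun m => ((m : ℝ) + 1) ^ m / (m + 1)!

noncomputable def selfPowSeries : ℝ⟦X⟧ := mk fun m => (m : ℝ) ^ m / m !

theorem X_mul_derivative_treeSeries : X * d⁄dX ℝ treeSeries = selfPowSeries - 1 := by
  ext n
  rw [coeff_X_mul_derivative, map_sub, coeff_one]
  cases n with
  | zero => rw [selfPowSeries, coeff_mk]; simp
  | succ n =>
    rw [treeSeries, selfPowSeries, coeff_succ_X_mul, coeff_mk, coeff_mk, if_neg n.succ_ne_zero,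
      sub_zero, Nat.cast_succ, pow_succ', mul_div_assoc]

theorem treeSeries_mul_selfPowSeries : treeSeries * selfPowSeries = selfPowSeries - 1 := by
  ext n
  rw [map_sub, coeff_one]
  cases n with
  | zero => rw [treeSeries, mul_assoc, coeff_zero_X_mul, selfPowSeries, coeff_mk]; simp
  | succ n =>
    rw [treeSeries, mul_assoc, coeff_succ_X_mul, coeff_mul, selfPowSeries, coeff_mk,
      if_neg n.succ_ne_zero, sub_zero]
    simp only [coeff_mk]
    push_cast
    exact sum_antidiagonal_pow_div_factorial n

theorem X_mul_derivative_selfPowSeries :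
    X * d⁄dX ℝ selfPowSeries = selfPowSeries ^ 3 - selfPowSeries ^ 2 := by
  have hD := congrArg (d⁄dX ℝ) treeSeries_mul_selfPowSeries
  rw [Derivation.leibniz, map_sub, Derivation.map_one_eq_zero, sub_zero, smul_eq_mul,
    smul_eq_mul] at hD
  linear_combination (X * d⁄dX ℝ selfPowSeries) * treeSeries_mul_selfPowSeries
    + selfPowSeries ^ 2 * X_mul_derivative_treeSeries - (X * selfPowSeries) * hD

theorem X_mul_derivative_selfPowSeries_pow (K : ℕ) :
    X * d⁄dX ℝ (selfPowSeries ^ K) = K • (selfPowSeries ^ (K + 2) - selfPowSeries ^ (K + 1)) := by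
  rw [derivative_pow, nsmul_eq_mul]
  cases K with
  | zero => simp
  | succ K =>
    rw [Nat.add_sub_cancel]
    linear_combination ((K + 1 : ℕ) * selfPowSeries ^ K : ℝ⟦X⟧) * X_mul_derivative_selfPowSeries

theorem natCast_mul_coeff_selfPowSeries_pow (K n : ℕ) :
    (n : ℝ) * coeff n (selfPowSeries ^ K)
      = K * (coeff n (selfPowSeries ^ (K + 2)) - coeff n (selfPowSeries ^ (K + 1))) := by
  rw [← coeff_X_mul_derivative, X_mul_derivative_selfPowSeries_pow, map_nsmul, map_sub,
    nsmul_eq_mul]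

theorem C1_eq_mul_coeff (K n : ℕ) : C1 K n = n ! / n ^ n * coeff n (selfPowSeries ^ K) := by
  rw [coeff_pow_eq_sum_antidiagonalTuple, C1, mul_sum]
  refine sum_congr rfl fun h hh => ?_
  have hsum : ∑ k, h k = n := Nat.mem_antidiagonalTuple.mp hh
  have hmult : (∏ k, ((h k)! : ℝ)) * Nat.multinomial univ h = n ! := by
    rw [← hsum]; exact_mod_cast Nat.multinomial_spec univ h
  have hpow : ((n : ℝ) ^ n) ≠ 0 := by exact_mod_cast Nat.pow_self_pos.ne'
  simp only [selfPowSeries, coeff_mk, div_pow, prod_div_distrib, prod_pow_eq_pow_sum, hsum]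
  field_simp
  linear_combination (∏ k, ((h k : ℝ) ^ h k)) * hmult

theorem C1_recursion_general (K n : ℕ) (hK : 1 ≤ K) :
    C1 (K + 2) n = C1 (K + 1) n + ((n : ℝ) / (K : ℝ)) * C1 K n := by
  have hK0 : (K : ℝ) ≠ 0 := by exact_mod_cast (show K ≠ 0 by omega)
  have hcoeff : coeff n (selfPowSeries ^ (K + 2))
      = coeff n (selfPowSeries ^ (K + 1)) + n / K * coeff n (selfPowSeries ^ K) := by
    field_simp
    linear_combination -natCast_mul_coeff_selfPowSeries_pow K n
  simp only [C1_eq_mul_coeff, hcoeff]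
  ring

theorem C1_recursion (K n : ℕ) (hK : 1 ≤ K) (hn : 1 ≤ n) :
    C1 (K + 2) n = C1 (K + 1) n + ((n : ℝ) / (K : ℝ)) * C1 K n :=
  C1_recursion_general K n hK
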